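/- arXiv:2511.08701 — 5 statements merged into one kernel-verified Lean document; each statement's English description precedes it below -/
import Mathlib

section
/- Let 0 < α < 1 and μ ∈ (πα/2, πα). Then the set {z ∈ ℂ \ {0} : μ ≤ |arg(−i z^α)| ≤ π} coincides with the sector Σ = {z ∈ ℂ \ {0} : max(−π, (μ − 3π/2)/α) ≤ arg z ≤ min(π, (π/2 − μ)/α)}. -/
/-!
Since `-I = exp (-π/2 · I)`, the number `-I z^a` is `exp (a log z - π/2 · I)`, so its argument is
`a arg z - π/2` reduced into `(-π, π]`. That quantity lies in `(-πa - π/2, πa - π/2]`, so the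
reduction is either the identity or a shift by `2π`, and in each case `μ ≤ |arg (-I z^a)|` becomes
a linear bound on `arg z`.
-/

open Complex Real

lemma arg_neg_I_mul_cpow_ofReal {z : ℂ} (hz : z ≠ 0) (a : ℝ) :
    arg (-I * z ^ (a : ℂ)) = toIocMod two_pi_pos (-π) (a * arg z - π / 2) := by
  rw [← exp_neg_pi_div_two_mul_I, cpow_def_of_ne_zero hz, ← Complex.exp_add, arg_exp]
  congr 1
  simp [log_im]
  ring

lemma le_abs_toIocMod_mul_sub_pi_div_two_iff {a μ θ : ℝ} (ha0 : 0 < a) (ha1 : a < 1)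
    (hμ1 : π * a / 2 < μ) (hμ2 : μ < π * a) (hθ : θ ∈ Set.Ioc (-π) π) :
    μ ≤ |toIocMod two_pi_pos (-π) (a * θ - π / 2)| ↔ μ - 3 * π / 2 ≤ a * θ ∧ a * θ ≤ π / 2 - μ := by
  obtain ⟨hθ1, hθ2⟩ := hθ
  have hlo : -(π * a) < a * θ := by nlinarith
  have hhi : a * θ ≤ π * a := by nlinarith
  have hpa : π * a < π := by nlinarith [pi_pos]
  rcases lt_or_ge (-π) (a * θ - π / 2) with h | h
  · rw [(toIocMod_eq_self two_pi_pos).2 ⟨h, by linarith⟩]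
    constructor
    · intro h'
      rcases abs_cases (a * θ - π / 2) with ⟨he, -⟩ | ⟨he, -⟩ <;> rw [he] at h' <;>
        constructor <;> linarith
    · rintro ⟨-, h'⟩
      rw [abs_of_neg (by linarith)]
      linarith
  · rw [← toIocMod_add_right, (toIocMod_eq_self two_pi_pos).2 ⟨by linarith, by linarith⟩,
      abs_of_nonneg (by linarith)]
    constructor
    · intro h'; constructor <;> linarith
    · rintro ⟨h', -⟩; linarith

/-- For `0 < α < 1` and `μ ∈ (πα/2, πα)`, the set
`{z ≠ 0 : μ ≤ |arg(−i z^α)| ≤ π}` coincides with the sector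
`Σ = {z ≠ 0 : max(−π, (μ − 3π/2)/α) ≤ arg z ≤ min(π, (π/2 − μ)/α)}`. -/
theorem sector_eq (a : ℝ) (ha0 : 0 < a) (ha1 : a < 1)
    (mu : ℝ) (hmu1 : Real.pi * a / 2 < mu) (hmu2 : mu < Real.pi * a) :
    {z : ℂ | z ≠ 0 ∧ mu ≤ |Complex.arg (-Complex.I * z ^ (a : ℂ))| ∧
        |Complex.arg (-Complex.I * z ^ (a : ℂ))| ≤ Real.pi} =
      {z : ℂ | z ≠ 0 ∧ max (-Real.pi) ((mu - 3 * Real.pi / 2) / a) ≤ Complex.arg z ∧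
        Complex.arg z ≤ min Real.pi ((Real.pi / 2 - mu) / a)} := by
  ext z
  refine and_congr_right fun hz => ?_
  rw [and_iff_left (abs_arg_le_pi _), arg_neg_I_mul_cpow_ofReal hz,
    le_abs_toIocMod_mul_sub_pi_div_two_iff ha0 ha1 hmu1 hmu2 (arg_mem_Ioc z)]
  simp only [max_le_iff, le_min_iff, div_le_iff₀ ha0, le_div_iff₀ ha0,
    (neg_pi_lt_arg z).le, arg_le_pi, true_and, mul_comm (arg z) a]
end

section
/- Let H be a complex Hilbert space, let (u_k)_{k∈ℕ} be pairwise orthogonal vectors in H with Σ_k ‖u_k‖² < ∞, let (μ_k)_{k∈ℕ} be a strictly increasing sequence of real numbers tending to +∞, and let S(η) = Σ_{k=1}^∞ (η + i μ_k)^{−1} u_k for η ∈ ℂ \ {−i μ_k : k ∈ ℕ}. Fix ℓ ∈ ℕ and r > 0 such that |μ_k − μ_ℓ| > r for every k ≠ ℓ. Then the integral of S over the positively oriented circle of center −i μ_ℓ and radius r satisfies (1/(2πi)) ∮_{|η + i μ_ℓ| = r} S(η) dη = u_ℓ. -/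
/-!
Only finitely many poles `-i μ_k` come near the circle, so the coefficients `(η + i μ_k)⁻¹` are
bounded on it by one constant `C`, uniformly in `k`. By orthogonality,
`‖∑_{k ∈ s} a_k u_k‖² = ∑_{k ∈ s} |a_k|² ‖u_k‖² ≤ C² ∑ ‖u_k‖²`, so the partial sums of `S` are
uniformly bounded on the circle and dominated convergence integrates the series termwise. By
Cauchy's theorem the `k`-th term contributes `2πi u_ℓ` for `k = ℓ` (the only pole inside the
circle) and `0` otherwise.
-/

open Complex Filter Metric Topology

theorem norm_smul_sq_le_of_norm_le {𝕜 E : Type*} [NormedField 𝕜] [NormedAddCommGroup E]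
    [NormedSpace 𝕜 E] {b : 𝕜} {C : ℝ} (hb : ‖b‖ ≤ C) (x : E) :
    ‖b • x‖ ^ 2 ≤ C ^ 2 * ‖x‖ ^ 2 := by
  rw [norm_smul, mul_pow]
  gcongr

section OrthogonalSeries

variable {𝕜 E ι : Type*} [RCLike 𝕜] [NormedAddCommGroup E] [InnerProductSpace 𝕜 E] {u : ι → E}

theorem norm_sum_sq_of_pairwise_inner_eq_zero (hu : Pairwise fun j k => inner 𝕜 (u j) (u k) = 0)
    (s : Finset ι) : ‖∑ k ∈ s, u k‖ ^ 2 = ∑ k ∈ s, ‖u k‖ ^ 2 := by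
  have key : inner 𝕜 (∑ j ∈ s, u j) (∑ k ∈ s, u k) = ∑ k ∈ s, inner 𝕜 (u k) (u k) := by
    rw [sum_inner]
    refine Finset.sum_congr rfl fun j hj => ?_
    rw [inner_sum]
    exact Finset.sum_eq_single_of_mem j hj fun k _ hkj => hu hkj.symm
  simp only [inner_self_eq_norm_sq_to_K] at key
  exact_mod_cast key

theorem summable_of_pairwise_inner_eq_zero [CompleteSpace E]
    (hu : Pairwise fun j k => inner 𝕜 (u j) (u k) = 0) (hsum : Summable fun k => ‖u k‖ ^ 2) :
    Summable u := by
  rw [summable_iff_cauchySeq_finset, cauchySeq_finset_iff_vanishing_norm]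
  intro ε hε
  obtain ⟨s, hs⟩ := summable_iff_vanishing_norm.mp hsum (ε ^ 2) (by positivity)
  refine ⟨s, fun t ht => lt_of_pow_lt_pow_left₀ 2 hε.le ?_⟩
  rw [norm_sum_sq_of_pairwise_inner_eq_zero hu t]
  exact (le_abs_self _).trans_lt (by simpa using hs t ht)

theorem pairwise_inner_smul_eq_zero (hu : Pairwise fun j k => inner 𝕜 (u j) (u k) = 0)
    (a : ι → 𝕜) : Pairwise fun j k => inner 𝕜 (a j • u j) (a k • u k) = 0 := fun j k hjk => by
  dsimp only
  rw [inner_smul_left, inner_smul_right, hu hjk, mul_zero, mul_zero]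

variable {a : ι → 𝕜} {C : ℝ}

theorem summable_smul_of_pairwise_inner_eq_zero [CompleteSpace E]
    (hu : Pairwise fun j k => inner 𝕜 (u j) (u k) = 0) (hsum : Summable fun k => ‖u k‖ ^ 2)
    (ha : ∀ k, ‖a k‖ ≤ C) : Summable fun k => a k • u k :=
  summable_of_pairwise_inner_eq_zero (pairwise_inner_smul_eq_zero hu a) <|
    .of_nonneg_of_le (fun _ => sq_nonneg _) (fun k => norm_smul_sq_le_of_norm_le (ha k) (u k))
      (hsum.mul_left (C ^ 2))

theorem norm_sum_smul_le_of_pairwise_inner_eq_zero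
    (hu : Pairwise fun j k => inner 𝕜 (u j) (u k) = 0) (hsum : Summable fun k => ‖u k‖ ^ 2)
    (ha : ∀ k, ‖a k‖ ≤ C) (s : Finset ι) :
    ‖∑ k ∈ s, a k • u k‖ ≤ √(C ^ 2 * ∑' k, ‖u k‖ ^ 2) := by
  refine Real.le_sqrt_of_sq_le ?_
  calc ‖∑ k ∈ s, a k • u k‖ ^ 2 = ∑ k ∈ s, ‖a k • u k‖ ^ 2 :=
        norm_sum_sq_of_pairwise_inner_eq_zero (pairwise_inner_smul_eq_zero hu a) s
    _ ≤ ∑ k ∈ s, C ^ 2 * ‖u k‖ ^ 2 :=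
        Finset.sum_le_sum fun k _ => norm_smul_sq_le_of_norm_le (ha k) (u k)
    _ = C ^ 2 * ∑ k ∈ s, ‖u k‖ ^ 2 := (Finset.mul_sum _ _ _).symm
    _ ≤ C ^ 2 * ∑' k, ‖u k‖ ^ 2 := by
        gcongr
        exact hsum.sum_le_tsum s fun k _ => sq_nonneg _

end OrthogonalSeries

section CircleIntegral

variable {E : Type*} [NormedAddCommGroup E] [NormedSpace ℂ E] {c : ℂ} {R : ℝ}

theorem tendsto_circleIntegral_of_dominated_convergence {ι : Type*} {l : Filter ι}
    [l.IsCountablyGenerated] {F : ι → ℂ → E} {g : ℂ → E} (C : ℝ) (hR : 0 ≤ R)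
    (hF : ∀ᶠ i in l, ContinuousOn (F i) (sphere c R))
    (hbound : ∀ᶠ i in l, ∀ z ∈ sphere c R, ‖F i z‖ ≤ C)
    (hlim : ∀ z ∈ sphere c R, Tendsto (fun i => F i z) l (𝓝 (g z))) :
    Tendsto (fun i => ∮ z in C(c, R), F i z) l (𝓝 (∮ z in C(c, R), g z)) := by
  have hderiv : Continuous (deriv (circleMap c R)) := by
    rw [funext (deriv_circleMap c R)]
    fun_prop
  refine intervalIntegral.tendsto_integral_filter_of_dominated_convergence (fun _ => R * C)
    (hF.mono fun i hi => (hderiv.smul (hi.comp_continuous (continuous_circleMap c R)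
      (circleMap_mem_sphere c hR))).aestronglyMeasurable)
    (hbound.mono fun i hi => MeasureTheory.ae_of_all _ fun θ _ => ?_) intervalIntegrable_const
    (MeasureTheory.ae_of_all _ fun θ _ => (hlim _ (circleMap_mem_sphere c hR θ)).const_smul _)
  rw [norm_smul, deriv_circleMap, norm_mul, norm_circleMap_zero, norm_I, mul_one,
    abs_of_nonneg hR]
  exact mul_le_mul_of_nonneg_left (hi _ (circleMap_mem_sphere c hR θ)) hR

theorem circleIntegral_sub_inv_of_notMem_closedBall {w : ℂ} (hR : 0 ≤ R)
    (hw : w ∉ closedBall c R) : ∮ z in C(c, R), (z - w)⁻¹ = 0 := by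
  refine DiffContOnCl.circleIntegral_eq_zero hR (DifferentiableOn.diffContOnCl_ball
    (U := {w}ᶜ) (fun z hz => ?_) fun z hz h => hw (h ▸ hz))
  exact ((differentiableAt_id.sub_const w).inv (sub_ne_zero.2 hz)).differentiableWithinAt

theorem hasSum_circleIntegral_smul_of_pairwise_inner_eq_zero {H ι : Type*} [NormedAddCommGroup H]
    [InnerProductSpace ℂ H] [CompleteSpace H] [Countable ι] {u : ι → H}
    (hu : Pairwise fun j k => inner ℂ (u j) (u k) = 0) (hsum : Summable fun k => ‖u k‖ ^ 2)
    {f : ι → ℂ → ℂ} {C : ℝ} (hR : 0 ≤ R) (hf : ∀ k, ContinuousOn (f k) (sphere c R))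
    (hC : ∀ k, ∀ z ∈ sphere c R, ‖f k z‖ ≤ C) :
    HasSum (fun k => (∮ z in C(c, R), f k z) • u k) (∮ z in C(c, R), ∑' k, f k z • u k) := by
  have hsmul (k : ι) : ContinuousOn (fun z => f k z • u k) (sphere c R) :=
    (hf k).smul continuousOn_const
  have hpartial (s : Finset ι) : ∑ k ∈ s, (∮ z in C(c, R), f k z) • u k =
      ∮ z in C(c, R), ∑ k ∈ s, f k z • u k := by
    rw [circleIntegral.integral_fun_sum fun k _ => (hsmul k).circleIntegrable hR]
    simp only [circleIntegral.integral_smul_const]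
  unfold HasSum
  simp only [hpartial]
  refine tendsto_circleIntegral_of_dominated_convergence _ hR
    (.of_forall fun s => continuousOn_finsetSum s fun k _ => hsmul k)
    (.of_forall fun s z hz =>
      norm_sum_smul_le_of_pairwise_inner_eq_zero (a := (f · z)) hu hsum (hC · z hz) s)
    fun z hz => (summable_smul_of_pairwise_inner_eq_zero hu hsum (hC · z hz)).hasSum

end CircleIntegral

theorem exists_forall_norm_inv_sub_le_of_mem_sphere {𝕜 ι : Type*} [NormedDivisionRing 𝕜]
    {p : ι → 𝕜} {c : 𝕜} {r : ℝ} (hp : ∀ k, dist (p k) c ≠ r)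
    (htop : Tendsto (fun k => dist (p k) c) cofinite atTop) :
    ∃ C, ∀ k, ∀ z ∈ sphere c r, ‖(z - p k)⁻¹‖ ≤ C := by
  have hgap : Tendsto (fun k => |dist (p k) c - r|⁻¹) cofinite (𝓝 0) :=
    tendsto_inv_atTop_zero.comp <| tendsto_abs_atTop_atTop.comp <|
      tendsto_atTop_add_const_right _ _ htop
  obtain ⟨C, hC⟩ := hgap.bddAbove_range_of_cofinite
  refine ⟨C, fun k z hz => le_trans ?_ (hC ⟨k, rfl⟩)⟩
  rw [norm_inv, ← dist_eq_norm]
  refine inv_anti₀ (abs_pos.2 (sub_ne_zero.2 (hp k))) ?_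
  simpa [mem_sphere.1 hz, dist_comm] using abs_dist_sub_le (p k) z c

theorem dist_neg_I_mul_ofReal (a b : ℝ) : dist (-(I * a)) (-(I * b)) = |a - b| := by
  rw [dist_neg_neg, dist_eq_norm, ← mul_sub, norm_mul, norm_I, one_mul, ← ofReal_sub, norm_real,
    Real.norm_eq_abs]

theorem residue_recovers_component_general
    {H : Type*} [NormedAddCommGroup H] [InnerProductSpace ℂ H] [CompleteSpace H]
    (u : ℕ → H) (hu : Pairwise fun j k => inner ℂ (u j) (u k) = (0 : ℂ))
    (hsum : Summable fun k => ‖u k‖ ^ 2)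
    (mu : ℕ → ℝ) (htop : Filter.Tendsto mu Filter.atTop Filter.atTop)
    (S : ℂ → H) (hS : ∀ η : ℂ, S η = ∑' k : ℕ, (η + Complex.I * mu k)⁻¹ • u k)
    (ℓ : ℕ) (r : ℝ) (hr : 0 < r) (hrl : ∀ k, k ≠ ℓ → r < |mu k - mu ℓ|) :
    (2 * Real.pi * Complex.I)⁻¹ • (∮ η in C(-Complex.I * mu ℓ, r), S η) = u ℓ := by
  set p : ℕ → ℂ := fun k => -(I * mu k)
  have hdist (k : ℕ) : dist (p k) (p ℓ) = |mu k - mu ℓ| := dist_neg_I_mul_ofReal _ _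
  have hS' : S = fun η => ∑' k, (η - p k)⁻¹ • u k := by
    funext η
    simp only [hS, p, sub_neg_eq_add]
  have hp (k : ℕ) : dist (p k) (p ℓ) ≠ r := by
    rcases eq_or_ne k ℓ with rfl | hk
    · simpa using hr.ne
    · exact (hdist k ▸ hrl k hk).ne'
  have htop' : Tendsto (fun k => dist (p k) (p ℓ)) cofinite atTop := by
    simp_rw [hdist, Nat.cofinite_eq_atTop, sub_eq_add_neg]
    exact tendsto_abs_atTop_atTop.comp (tendsto_atTop_add_const_right _ _ htop)
  obtain ⟨C, hC⟩ := exists_forall_norm_inv_sub_le_of_mem_sphere hp htop'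
  have hcont (k : ℕ) : ContinuousOn (fun z => (z - p k)⁻¹) (sphere (p ℓ) r) :=
    (continuousOn_id.sub continuousOn_const).inv₀ fun z hz h =>
      hp k (by rw [← sub_eq_zero.1 (show z - p k = 0 from h)]; exact hz)
  have hsumS := hasSum_circleIntegral_smul_of_pairwise_inner_eq_zero hu hsum hr.le hcont hC
  have hresidue : HasSum (fun k => (∮ z in C(p ℓ, r), (z - p k)⁻¹) • u k)
      ((2 * Real.pi * I) • u ℓ) := by
    convert hasSum_ite_eq ℓ ((2 * Real.pi * I) • u ℓ) using 2 with k
    rcases eq_or_ne k ℓ with rfl | hk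
    · simp [circleIntegral.integral_sub_inv_of_mem_ball (mem_ball_self hr)]
    · rw [circleIntegral_sub_inv_of_notMem_closedBall hr.le, zero_smul, if_neg hk]
      simpa [hdist k] using hrl k hk
  have hcenter : -I * mu ℓ = p ℓ := neg_mul _ _
  rw [hcenter, hS', hsumS.unique hresidue, inv_smul_smul₀ two_pi_I_ne_zero]

/-- Termwise contour integration: with `S(η) = ∑ (η + i μ_k)⁻¹ u_k` as above, integrating over
the positively oriented circle of center `−i μ_ℓ` and radius `r` (chosen so that no other pole
is on or inside it) recovers `u_ℓ`: `(1/(2πi)) ∮ S(η) dη = u_ℓ`. -/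
theorem residue_recovers_component
    {H : Type*} [NormedAddCommGroup H] [InnerProductSpace ℂ H] [CompleteSpace H]
    (u : ℕ → H) (hu : Pairwise fun j k => inner ℂ (u j) (u k) = (0 : ℂ))
    (hsum : Summable fun k => ‖u k‖ ^ 2)
    (mu : ℕ → ℝ) (hmono : StrictMono mu) (htop : Filter.Tendsto mu Filter.atTop Filter.atTop)
    (S : ℂ → H) (hS : ∀ η : ℂ, S η = ∑' k : ℕ, (η + Complex.I * mu k)⁻¹ • u k)
    (ℓ : ℕ) (r : ℝ) (hr : 0 < r) (hrl : ∀ k, k ≠ ℓ → r < |mu k - mu ℓ|) :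
    (2 * Real.pi * Complex.I)⁻¹ • (∮ η in C(-Complex.I * mu ℓ, r), S η) = u ℓ :=
  residue_recovers_component_general u hu hsum mu htop S hS ℓ r hr hrl
end

section
/- Let 0 < α < 1 and ζ ∈ ℂ. Then the function f(τ) = E_{α,1}(ζ τ^α) is differentiable on (0, ∞), and for every t > 0 its Caputo fractional derivative of order α exists and satisfies (1/Γ(1−α)) ∫₀^t (t−τ)^{−α} f'(τ) dτ = ζ E_{α,1}(ζ t^α). -/
/-!
Write `φ_p(s) = s ^ p / Γ(p + 1)` (`powDivGamma p s`), so that `E_{α,1}(ζ s^α) = ∑ ζ^k φ_{αk}(s)`.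
Termwise, `φ_p' = φ_{p-1}` and, by the Beta integral, the Caputo derivative of `φ_p` is `φ_{p-α}`
for `p > 0`; the constant term `k = 0` is killed by the derivative, and shifting the index turns
`∑_{k ≥ 1} ζ^k φ_{αk-α}(t)` into `ζ E_{α,1}(ζ t^α)`. Differentiating and integrating termwise is
justified because `Γ(x + α) / Γ(x) → ∞` (log-convexity of `Γ`), so these series converge absolutely
by the ratio test.
-/

/-- The Mittag-Leffler function `E_{α,β}(w) = ∑_{k=0}^∞ w^k / Γ(αk + β)`. -/
noncomputable def mittagLeffler (a b : ℝ) (w : ℂ) : ℂ :=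
  ∑' k : ℕ, w ^ k / (Real.Gamma (a * k + b) : ℂ)

open Real Set Filter MeasureTheory

theorem mul_Gamma_le_rpow_mul_Gamma_add {a x : ℝ} (ha0 : 0 < a) (ha1 : a < 1) (hx : 0 < x) :
    x * Gamma x ≤ (x + a) ^ (1 - a) * Gamma (x + a) := by
  have hxa : 0 < x + a := by linarith
  have hconv := Gamma_mul_add_mul_le_rpow_Gamma_mul_rpow_Gamma hxa (by linarith : 0 < x + a + 1)
    ha0 (by linarith : 0 < 1 - a) (by ring)
  rw [show a * (x + a) + (1 - a) * (x + a + 1) = x + 1 by ring, Gamma_add_one hx.ne',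
    Gamma_add_one hxa.ne', mul_rpow hxa.le (Gamma_pos_of_pos hxa).le] at hconv
  calc x * Gamma x ≤ Gamma (x + a) ^ a * ((x + a) ^ (1 - a) * Gamma (x + a) ^ (1 - a)) := hconv
    _ = (x + a) ^ (1 - a) * Gamma (x + a) := by
      rw [mul_left_comm, ← rpow_add (Gamma_pos_of_pos hxa), add_sub_cancel, rpow_one]

theorem tendsto_Gamma_add_div_Gamma_atTop {a : ℝ} (ha0 : 0 < a) (ha1 : a < 1) :
    Tendsto (fun x => Gamma (x + a) / Gamma x) atTop atTop := by
  have hlim : Tendsto (fun x : ℝ => (x + a) ^ a / 2) atTop atTop :=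
    ((tendsto_rpow_atTop ha0).comp (tendsto_atTop_add_const_right _ a tendsto_id)).atTop_div_const
      two_pos
  refine tendsto_atTop_mono' _ ?_ hlim
  filter_upwards [eventually_ge_atTop a] with x hx
  have hx0 : 0 < x := ha0.trans_le hx
  have hxa : 0 < x + a := by linarith
  rw [le_div_iff₀ (Gamma_pos_of_pos hx0)]
  calc (x + a) ^ a / 2 * Gamma x = (x + a) / 2 * Gamma x / (x + a) ^ (1 - a) := by
        rw [rpow_sub hxa, rpow_one]; field_simp
    _ ≤ x * Gamma x / (x + a) ^ (1 - a) := by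
        gcongr
        linarith
    _ ≤ Gamma (x + a) := by
        rw [div_le_iff₀ (by positivity), mul_comm (Gamma _)]
        exact mul_Gamma_le_rpow_mul_Gamma_add ha0 ha1 hx0

theorem summable_pow_div_Gamma {a b : ℝ} (ha0 : 0 < a) (ha1 : a < 1) (hb : 0 < b) (R : ℝ) :
    Summable fun k : ℕ => R ^ k / Gamma (a * k + b) := by
  refine summable_of_ratio_norm_eventually_le one_half_lt_one ?_
  have hx : Tendsto (fun k : ℕ => a * k + b) atTop atTop :=
    tendsto_atTop_add_const_right _ b (tendsto_natCast_atTop_atTop.const_mul_atTop ha0)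
  filter_upwards [hx.eventually ((tendsto_Gamma_add_div_Gamma_atTop ha0 ha1).eventually_ge_atTop
    (2 * |R|))] with k hk
  have hΓ : 0 < Gamma (a * k + b) := Gamma_pos_of_pos (by positivity)
  rw [le_div_iff₀ hΓ] at hk
  rw [Nat.cast_succ, show a * (k + 1 : ℝ) + b = a * k + b + a by ring, norm_div, norm_div,
    norm_pow, norm_pow, Real.norm_of_nonneg hΓ.le,
    Real.norm_of_nonneg (Gamma_pos_of_pos (by positivity)).le, pow_succ, Real.norm_eq_abs,
    div_le_iff₀ (Gamma_pos_of_pos (by positivity))]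
  calc |R| ^ k * |R| = 1 / 2 * (|R| ^ k / Gamma (a * k + b)) * (2 * |R| * Gamma (a * k + b)) := by
        field_simp
    _ ≤ 1 / 2 * (|R| ^ k / Gamma (a * k + b)) * Gamma (a * k + b + a) := by gcongr

theorem summable_mittagLeffler {a b : ℝ} (ha0 : 0 < a) (ha1 : a < 1) (hb : 0 < b) (w : ℂ) :
    Summable fun k : ℕ => w ^ k / (Gamma (a * k + b) : ℂ) :=
  (summable_pow_div_Gamma ha0 ha1 hb ‖w‖).of_norm_bounded fun k => by
    rw [norm_div, norm_pow, Complex.norm_real, Real.norm_of_nonneg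
      (Gamma_pos_of_pos (by positivity)).le]

noncomputable def powDivGamma (p s : ℝ) : ℝ :=
  s ^ p / Gamma (p + 1)

theorem powDivGamma_nonneg {p s : ℝ} (hp : 0 ≤ p + 1) (hs : 0 ≤ s) : 0 ≤ powDivGamma p s :=
  div_nonneg (rpow_nonneg hs p) (Gamma_nonneg_of_nonneg hp)

theorem hasDerivAt_powDivGamma {p s : ℝ} (hp : 0 < p) (hs : 0 < s) :
    HasDerivAt (powDivGamma p) (powDivGamma (p - 1) s) s := by
  refine ((hasDerivAt_rpow_const (Or.inl hs.ne')).div_const (Gamma (p + 1))).congr_deriv ?_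
  rw [powDivGamma, sub_add_cancel, Gamma_add_one hp.ne', mul_div_mul_left _ _ hp.ne']

theorem powDivGamma_mul_natCast (a : ℝ) (k : ℕ) {s : ℝ} (hs : 0 ≤ s) :
    powDivGamma (a * k) s = (s ^ a) ^ k / Gamma (a * k + 1) := by
  rw [powDivGamma, rpow_mul hs, rpow_natCast]

theorem powDivGamma_sub_one_le {p m y T : ℝ} (hp : 0 < p) (hm : 0 < m) (hmy : m ≤ y)
    (hyT : y ≤ T) : powDivGamma (p - 1) y ≤ T ^ p / (m * Gamma p) := by
  have hy : 0 < y := hm.trans_le hmy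
  rw [powDivGamma, sub_add_cancel, rpow_sub_one hy.ne', div_div]
  gcongr
  exact rpow_nonneg (by linarith) p

theorem hasSum_mittagLeffler_mul_rpow {a : ℝ} (ha0 : 0 < a) (ha1 : a < 1) (ζ : ℂ) {s : ℝ}
    (hs : 0 ≤ s) :
    HasSum (fun k : ℕ => ζ ^ k * (powDivGamma (a * k) s : ℂ))
      (mittagLeffler a 1 (ζ * ((s ^ a : ℝ) : ℂ))) := by
  have hterm (k : ℕ) : ζ ^ k * (powDivGamma (a * k) s : ℂ) =
      (ζ * ((s ^ a : ℝ) : ℂ)) ^ k / (Gamma (a * k + 1) : ℂ) := by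
    rw [powDivGamma_mul_natCast a k hs]
    push_cast
    ring
  simp_rw [hterm]
  exact (summable_mittagLeffler ha0 ha1 one_pos _).hasSum

theorem mittagLeffler_mul_rpow_eq_one_add {a : ℝ} (ha0 : 0 < a) (ha1 : a < 1) (ζ : ℂ) {s : ℝ}
    (hs : 0 ≤ s) :
    mittagLeffler a 1 (ζ * ((s ^ a : ℝ) : ℂ)) =
      1 + ∑' k : ℕ, ζ ^ (k + 1) * (powDivGamma (a * (k + 1)) s : ℂ) := by
  have h := hasSum_mittagLeffler_mul_rpow ha0 ha1 ζ hs
  rw [← h.tsum_eq, h.summable.tsum_eq_zero_add]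
  simp [powDivGamma]

theorem hasDerivAt_mittagLeffler_mul_rpow {a : ℝ} (ha0 : 0 < a) (ha1 : a < 1) (ζ : ℂ) {τ : ℝ}
    (hτ : 0 < τ) :
    HasDerivAt (fun s : ℝ => mittagLeffler a 1 (ζ * ((s ^ a : ℝ) : ℂ)))
      (∑' k : ℕ, ζ ^ (k + 1) * (powDivGamma (a * (k + 1) - 1) τ : ℂ)) τ := by
  set R := ‖ζ‖ * (2 * τ) ^ a
  have hsum : HasDerivAt
      (fun s : ℝ => ∑' k : ℕ, ζ ^ (k + 1) * (powDivGamma (a * (k + 1)) s : ℂ))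
      (∑' k : ℕ, ζ ^ (k + 1) * (powDivGamma (a * (k + 1) - 1) τ : ℂ)) τ := by
    refine hasDerivAt_tsum_of_isPreconnected (t := Ioo (τ / 2) (2 * τ))
      (g := fun (k : ℕ) s => ζ ^ (k + 1) * (powDivGamma (a * (k + 1)) s : ℂ))
      (g' := fun (k : ℕ) s => ζ ^ (k + 1) * (powDivGamma (a * (k + 1) - 1) s : ℂ))
      ((summable_pow_div_Gamma ha0 ha1 ha0 R).mul_left (R / (τ / 2))) isOpen_Ioo
      isPreconnected_Ioo (fun k y hy => ?_) (fun k y hy => ?_) (y₀ := τ) ?_ ?_ ?_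
    · exact ((hasDerivAt_powDivGamma (by positivity) (by linarith [hy.1])).ofReal_comp).const_mul _
    · have hp : 0 < a * (k + 1) := by positivity
      rw [norm_mul, norm_pow, Complex.norm_real, Real.norm_of_nonneg
        (powDivGamma_nonneg (by linarith) (by linarith [hy.1]))]
      calc ‖ζ‖ ^ (k + 1) * powDivGamma (a * (k + 1) - 1) y
          ≤ ‖ζ‖ ^ (k + 1) * ((2 * τ) ^ (a * (k + 1)) / (τ / 2 * Gamma (a * (k + 1)))) := by
            gcongr
            exact powDivGamma_sub_one_le hp (by positivity) hy.1.le hy.2.le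
        _ = R / (τ / 2) * (R ^ k / Gamma (a * k + a)) := by
            rw [rpow_mul (by positivity), show ((k : ℝ) + 1) = ((k + 1 : ℕ) : ℝ) by push_cast; ring,
              rpow_natCast, Nat.cast_succ, mul_add_one a]
            simp only [R]
            ring
    · exact ⟨by linarith, by linarith⟩
    · simpa only [Nat.cast_succ] using
        ((hasSum_nat_add_iff' 1).mpr (hasSum_mittagLeffler_mul_rpow ha0 ha1 ζ hτ.le)).summable
    · exact ⟨by linarith, by linarith⟩
  refine (hsum.const_add 1).congr_of_eventuallyEq ?_
  filter_upwards [lt_mem_nhds hτ] with s hs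
  exact mittagLeffler_mul_rpow_eq_one_add ha0 ha1 ζ hs.le

theorem integrableOn_rpow_mul_sub_rpow {p q t : ℝ} (hp : 0 < p) (hq : 0 < q) (ht : 0 < t) :
    IntegrableOn (fun τ => τ ^ (p - 1) * (t - τ) ^ (q - 1)) (Ioo 0 t) := by
  have hB := ((Complex.betaIntegral_convergent (u := p) (v := q) (by simpa) (by simpa)).norm
    |>.comp_mul_left (c := t⁻¹)).const_mul (t ^ (p + q - 2))
  rw [zero_div, one_div, inv_inv, intervalIntegrable_iff_integrableOn_Ioo_of_le ht.le] at hB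
  refine hB.congr_fun (fun τ hτ => ?_) measurableSet_Ioo
  have hτt : 0 < t⁻¹ * τ := mul_pos (inv_pos.2 ht) hτ.1
  have hτt' : 0 < 1 - t⁻¹ * τ := by
    rw [sub_pos, inv_mul_lt_iff₀ ht, mul_one]; exact hτ.2
  have hsub : (1 : ℂ) - ((t⁻¹ * τ : ℝ) : ℂ) = ((1 - t⁻¹ * τ : ℝ) : ℂ) := by push_cast; ring
  dsimp only
  rw [norm_mul, hsub, Complex.norm_cpow_eq_rpow_re_of_pos hτt,
    Complex.norm_cpow_eq_rpow_re_of_pos hτt']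
  simp only [Complex.sub_re, Complex.ofReal_re, Complex.one_re]
  rw [mul_rpow (inv_pos.2 ht).le hτ.1.le, show 1 - t⁻¹ * τ = t⁻¹ * (t - τ) by field_simp,
    mul_rpow (inv_pos.2 ht).le (by linarith [hτ.2]), inv_rpow ht.le, inv_rpow ht.le,
    show p + q - 2 = (p - 1) + (q - 1) by ring, rpow_add ht]
  field_simp

theorem integral_rpow_mul_sub_rpow {p q t : ℝ} (hp : 0 < p) (hq : 0 < q) (ht : 0 < t) :
    ∫ τ in Ioo 0 t, τ ^ (p - 1) * (t - τ) ^ (q - 1) =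
      Gamma p * Gamma q / Gamma (p + q) * t ^ (p + q - 1) := by
  have hscaled := Complex.betaIntegral_scaled p q ht
  have hΓ := Complex.Gamma_mul_Gamma_eq_betaIntegral (s := p) (t := q) (by simpa) (by simpa)
  rw [intervalIntegral.integral_of_le ht.le, integral_Ioc_eq_integral_Ioo] at hscaled
  apply Complex.ofReal_injective
  have hne : Complex.Gamma (p + q) ≠ 0 :=
    Complex.Gamma_ne_zero_of_re_pos (by rw [← Complex.ofReal_add, Complex.ofReal_re]; linarith)
  rw [← integral_complex_ofReal, setIntegral_congr_fun measurableSet_Ioo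
    (g := fun τ : ℝ => (τ : ℂ) ^ ((p : ℂ) - 1) * ((t : ℂ) - τ) ^ ((q : ℂ) - 1)) fun τ hτ => by
      rw [Complex.ofReal_mul, Complex.ofReal_cpow hτ.1.le, Complex.ofReal_cpow
        (sub_nonneg.2 hτ.2.le)]
      push_cast
      rfl, hscaled,
    eq_div_of_mul_eq hne ((mul_comm _ _).trans hΓ.symm)]
  push_cast [Complex.ofReal_cpow ht.le, ← Complex.Gamma_ofReal]
  ring

theorem sub_rpow_neg_mul_powDivGamma_sub_one {a p t τ : ℝ} :
    (t - τ) ^ (-a) * powDivGamma (p - 1) τ =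
      (Gamma p)⁻¹ * (τ ^ (p - 1) * (t - τ) ^ ((1 - a) - 1)) := by
  rw [powDivGamma, sub_add_cancel, sub_sub_cancel_left]
  ring

theorem integrableOn_sub_rpow_neg_mul_powDivGamma {a p t : ℝ} (ha : a < 1) (hp : 0 < p)
    (ht : 0 < t) : IntegrableOn (fun τ => (t - τ) ^ (-a) * powDivGamma (p - 1) τ) (Ioo 0 t) := by
  simp_rw [sub_rpow_neg_mul_powDivGamma_sub_one]
  exact (integrableOn_rpow_mul_sub_rpow hp (sub_pos.2 ha) ht).const_mul _

theorem integral_sub_rpow_neg_mul_powDivGamma {a p t : ℝ} (ha : a < 1) (hp : 0 < p) (ht : 0 < t) :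
    ∫ τ in Ioo 0 t, (t - τ) ^ (-a) * powDivGamma (p - 1) τ =
      Gamma (1 - a) * powDivGamma (p - a) t := by
  simp_rw [sub_rpow_neg_mul_powDivGamma_sub_one]
  rw [integral_const_mul, integral_rpow_mul_sub_rpow hp (sub_pos.2 ha) ht, powDivGamma,
    show p + (1 - a) = p - a + 1 by ring, show p - a + 1 - 1 = p - a by ring]
  field_simp [(Gamma_pos_of_pos hp).ne']

theorem integrable_of_summable_integral_norm {ι α E : Type*} [Countable ι] [MeasurableSpace α]
    {μ : Measure α} [NormedAddCommGroup E] {F : ι → α → E} {f : α → E}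
    (hf : AEStronglyMeasurable f μ)
    (hF_int : ∀ k, Integrable (F k) μ) (hF_sum : Summable fun k => ∫ x, ‖F k x‖ ∂μ)
    (hfF : ∀ᵐ x ∂μ, f x = ∑' k, F k x) : Integrable f μ := by
  refine ⟨hf, ?_⟩
  calc ∫⁻ x, ‖f x‖ₑ ∂μ ≤ ∫⁻ x, ∑' k, ‖F k x‖ₑ ∂μ :=
        lintegral_mono_ae (hfF.mono fun x hx => hx ▸ enorm_tsum_le_tsum_enorm)
    _ = ∑' k, ENNReal.ofReal (∫ x, ‖F k x‖ ∂μ) := by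
        rw [lintegral_tsum fun k => (hF_int k).1.enorm]
        simp_rw [ofReal_integral_norm_eq_lintegral_enorm (hF_int _)]
    _ < ⊤ := by
        rw [← ENNReal.ofReal_tsum_of_nonneg (fun k => integral_nonneg fun x => norm_nonneg _)
          hF_sum]
        exact ENNReal.ofReal_lt_top

theorem integral_sub_rpow_neg_mul_tsum_powDivGamma {a t : ℝ} (ha : a < 1) (ht : 0 < t)
    {c : ℕ → ℂ} {p : ℕ → ℝ} (hp : ∀ k, 0 < p k)
    (hc : Summable fun k => ‖c k‖ * powDivGamma (p k - a) t) {g : ℝ → ℂ}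
    (hg_meas : AEStronglyMeasurable g (volume.restrict (Ioo 0 t)))
    (hg : ∀ τ ∈ Ioo 0 t, g τ = ∑' k, c k * powDivGamma (p k - 1) τ) :
    IntegrableOn (fun τ => (((t - τ) ^ (-a) : ℝ) : ℂ) * g τ) (Ioo 0 t) ∧
      ∫ τ in Ioo 0 t, (((t - τ) ^ (-a) : ℝ) : ℂ) * g τ =
        Gamma (1 - a) * ∑' k, c k * powDivGamma (p k - a) t := by
  set F : ℕ → ℝ → ℂ := fun k τ => c k * ((t - τ) ^ (-a) * powDivGamma (p k - 1) τ : ℝ)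
  have hF_int (k : ℕ) : Integrable (F k) (volume.restrict (Ioo 0 t)) :=
    (integrableOn_sub_rpow_neg_mul_powDivGamma ha (hp k) ht).ofReal.const_mul (c k)
  have hF_val (k : ℕ) :
      ∫ τ in Ioo 0 t, F k τ = c k * (Gamma (1 - a) * powDivGamma (p k - a) t : ℝ) := by
    rw [integral_const_mul, integral_complex_ofReal,
      integral_sub_rpow_neg_mul_powDivGamma ha (hp k) ht]
  have hF_norm (k : ℕ) :
      ∫ τ in Ioo 0 t, ‖F k τ‖ = ‖c k‖ * (Gamma (1 - a) * powDivGamma (p k - a) t) := by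
    rw [← integral_sub_rpow_neg_mul_powDivGamma ha (hp k) ht, ← integral_const_mul]
    refine setIntegral_congr_fun measurableSet_Ioo fun τ hτ => ?_
    rw [norm_mul, Complex.norm_real, Real.norm_of_nonneg (mul_nonneg
      (rpow_nonneg (sub_nonneg.2 hτ.2.le) _) (powDivGamma_nonneg (by linarith [hp k]) hτ.1.le))]
  have hF_sum : Summable fun k => ∫ τ in Ioo 0 t, ‖F k τ‖ := by
    simp_rw [hF_norm, mul_left_comm _ (Gamma (1 - a))]
    exact hc.mul_left _
  have hgF :
      ∀ᵐ τ ∂volume.restrict (Ioo 0 t), (((t - τ) ^ (-a) : ℝ) : ℂ) * g τ = ∑' k, F k τ := by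
    filter_upwards [ae_restrict_mem measurableSet_Ioo] with τ hτ
    rw [hg τ hτ, ← tsum_mul_left]
    congr with k
    simp only [F]
    push_cast
    ring
  refine ⟨integrable_of_summable_integral_norm
    ((Complex.measurable_ofReal.comp (by fun_prop)).aestronglyMeasurable.mul hg_meas)
    hF_int hF_sum hgF, ?_⟩
  rw [integral_congr_ae hgF, ← integral_tsum_of_summable_integral_norm hF_int hF_sum,
    ← tsum_mul_left]
  simp_rw [hF_val]
  push_cast
  congr with k
  ring

/-- For `0 < α < 1` and `ζ ∈ ℂ`, the function `f(τ) = E_{α,1}(ζ τ^α)` is differentiable on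
`(0,∞)`, and for every `t > 0` its Caputo derivative of order `α` exists and equals
`ζ E_{α,1}(ζ t^α)`. -/
theorem caputo_deriv_mittagLeffler (a : ℝ) (ha0 : 0 < a) (ha1 : a < 1) (ζ : ℂ) :
    (∀ τ ∈ Set.Ioi (0 : ℝ),
      DifferentiableAt ℝ (fun s : ℝ => mittagLeffler a 1 (ζ * ((s ^ a : ℝ) : ℂ))) τ) ∧
    ∀ t : ℝ, 0 < t →
      MeasureTheory.IntegrableOn
        (fun τ : ℝ => (((t - τ) ^ (-a) : ℝ) : ℂ) *
          deriv (fun s : ℝ => mittagLeffler a 1 (ζ * ((s ^ a : ℝ) : ℂ))) τ)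
        (Set.Ioo 0 t) ∧
      (1 / (Real.Gamma (1 - a) : ℂ)) *
          ∫ τ in Set.Ioo (0 : ℝ) t, (((t - τ) ^ (-a) : ℝ) : ℂ) *
            deriv (fun s : ℝ => mittagLeffler a 1 (ζ * ((s ^ a : ℝ) : ℂ))) τ
        = ζ * mittagLeffler a 1 (ζ * ((t ^ a : ℝ) : ℂ)) := by
  refine ⟨fun τ hτ => (hasDerivAt_mittagLeffler_mul_rpow ha0 ha1 ζ hτ).differentiableAt,
    fun t ht => ?_⟩
  have hc : Summable fun k : ℕ => ‖ζ ^ (k + 1)‖ * powDivGamma (a * (k + 1) - a) t := by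
    refine ((summable_pow_div_Gamma ha0 ha1 one_pos (‖ζ‖ * t ^ a)).mul_left ‖ζ‖).congr fun k => ?_
    rw [mul_add_one, add_sub_cancel_right, powDivGamma_mul_natCast a k ht.le, norm_pow, pow_succ,
      mul_pow]
    ring
  obtain ⟨hint, hval⟩ := integral_sub_rpow_neg_mul_tsum_powDivGamma ha1 ht
    (c := fun k => ζ ^ (k + 1)) (p := fun k : ℕ => a * ((k : ℝ) + 1)) (fun k => by positivity) hc
    (measurable_deriv _).aestronglyMeasurable
    fun τ hτ => (hasDerivAt_mittagLeffler_mul_rpow ha0 ha1 ζ hτ.1).deriv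
  refine ⟨hint, ?_⟩
  rw [hval, one_div,
    inv_mul_cancel_left₀ (Complex.ofReal_ne_zero.2 (Gamma_pos_of_pos (sub_pos.2 ha1)).ne'),
    ← (hasSum_mittagLeffler_mul_rpow ha0 ha1 ζ ht.le).tsum_eq, ← tsum_mul_left]
  simp_rw [mul_add_one, add_sub_cancel_right, pow_succ]
  congr with k
  ring
end

section
/- Let 0 < α < 1, ζ ∈ ℂ, and t > 0. Then the Riemann–Liouville fractional integral of order 1−α of the function s ↦ s^{α−1} E_{α,α}(ζ s^α) satisfies (1/Γ(1−α)) ∫₀^t (t−s)^{−α} s^{α−1} E_{α,α}(ζ s^α) ds = E_{α,1}(ζ t^α). -/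
open MeasureTheory Real Set Filter

namespace MeasureTheory

variable {α E ι : Type*} [MeasurableSpace α] {μ : Measure α} [NormedAddCommGroup E]
  [MeasurableSpace E] [BorelSpace E] [SecondCountableTopology E] [CompleteSpace E] [Countable ι]

theorem integrable_tsum_of_summable_integral_norm {F : ι → α → E}
    (hF_int : ∀ i, Integrable (F i) μ) (hF_sum : Summable fun i ↦ ∫ a, ‖F i a‖ ∂μ) :
    Integrable (fun a ↦ ∑' i, F i a) μ := by
  refine ⟨(AEMeasurable.tsum fun i ↦ (hF_int i).aemeasurable).aestronglyMeasurable, ?_⟩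
  have hlintegral : ∫⁻ a, ∑' i, ‖F i a‖ₑ ∂μ = ENNReal.ofReal (∑' i, ∫ a, ‖F i a‖ ∂μ) := by
    rw [lintegral_tsum fun i ↦ (hF_int i).aemeasurable.enorm,
      ENNReal.ofReal_tsum_of_nonneg (fun i ↦ integral_nonneg fun a ↦ norm_nonneg _) hF_sum]
    simp_rw [ofReal_integral_norm_eq_lintegral_enorm (hF_int _)]
  calc ∫⁻ a, ‖∑' i, F i a‖ₑ ∂μ ≤ ∫⁻ a, ∑' i, ‖F i a‖ₑ ∂μ :=
        lintegral_mono fun _ ↦ enorm_tsum_le_tsum_enorm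
    _ < ⊤ := hlintegral ▸ ENNReal.ofReal_lt_top

end MeasureTheory

namespace Real

theorem Gamma_mul_sub_one_rpow_le_Gamma_add {x c : ℝ} (hx : 1 < x) (hc : 0 < c) :
    Gamma x * (x - 1) ^ c ≤ Gamma (x + c) := by
  have hx1 : 0 < x - 1 := by linarith
  have hlogΓ : log (Gamma x) = log (x - 1) + log (Gamma (x - 1)) := by
    rw [← log_mul hx1.ne' (Gamma_pos_of_pos hx1).ne', ← Gamma_add_one hx1.ne', sub_add_cancel]
  -- The slope of `log ∘ Gamma` on `[x - 1, x]` is `log (x - 1)`, and it can only grow to the right.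
  have hslope := convexOn_log_Gamma.slope_mono_adjacent (x := x - 1) (y := x) (z := x + c)
    (mem_Ioi.2 hx1) (mem_Ioi.2 (by linarith)) (by linarith) (by linarith)
  simp only [Function.comp, hlogΓ, sub_sub_cancel, div_one, add_sub_cancel_left,
    add_sub_cancel_right] at hslope
  have hlog : log (Gamma x) + c * log (x - 1) ≤ log (Gamma (x + c)) := by
    rw [le_div_iff₀ hc] at hslope
    linarith
  have := exp_le_exp.2 hlog
  rwa [exp_add, exp_log (Gamma_pos_of_pos (by linarith)), exp_log (Gamma_pos_of_pos (by linarith)),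
    mul_comm c, ← rpow_def_of_pos hx1] at this

theorem summable_pow_div_Gamma_mul_add {a b : ℝ} (ha : 0 < a) (hb : 0 < b) (r : ℝ) :
    Summable fun k : ℕ ↦ r ^ k / Gamma (a * k + b) := by
  have hlin : Tendsto (fun k : ℕ ↦ a * k + b - 1) atTop atTop :=
    tendsto_atTop_add_const_right _ _
      ((tendsto_natCast_atTop_atTop.const_mul_atTop ha).atTop_add tendsto_const_nhds)
  refine summable_of_ratio_norm_eventually_le (r := 1 / 2) (by norm_num) ?_
  filter_upwards [hlin.eventually_gt_atTop 0,
    ((tendsto_rpow_atTop ha).comp hlin).eventually_ge_atTop (2 * |r|)] with k hk hrk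
  have hΓ : 0 < Gamma (a * k + b) := Gamma_pos_of_pos (by linarith)
  have hstep : Gamma (a * k + b) * (2 * |r|) ≤ Gamma (a * ↑(k + 1) + b) := calc
    Gamma (a * k + b) * (2 * |r|) ≤ Gamma (a * k + b) * (a * k + b - 1) ^ a := by
      gcongr; exact hrk
    _ ≤ Gamma (a * k + b + a) := Gamma_mul_sub_one_rpow_le_Gamma_add (by linarith) ha
    _ = Gamma (a * ↑(k + 1) + b) := by push_cast; ring_nf
  have hΓ' : 0 < Gamma (a * ↑(k + 1) + b) := Gamma_pos_of_pos (by positivity)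
  rw [norm_div, norm_div, norm_pow, norm_pow, norm_of_nonneg hΓ.le, norm_of_nonneg hΓ'.le,
    norm_eq_abs, div_le_iff₀ hΓ']
  calc |r| ^ (k + 1) = 1 / 2 * (|r| ^ k / Gamma (a * k + b)) * (Gamma (a * k + b) * (2 * |r|)) := by
        field_simp; ring
    _ ≤ 1 / 2 * (|r| ^ k / Gamma (a * k + b)) * Gamma (a * ↑(k + 1) + b) := by gcongr

end Real

theorem Complex.betaIntegral_ofReal {b c : ℝ} (hb : 0 < b) (hc : 0 < c) :
    betaIntegral b c = ((Real.Gamma b * Real.Gamma c / Real.Gamma (b + c) : ℝ) : ℂ) := by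
  have h := Gamma_mul_Gamma_eq_betaIntegral (s := b) (t := c) (by simpa) (by simpa)
  rw [← ofReal_add, Gamma_ofReal, Gamma_ofReal, Gamma_ofReal] at h
  rw [ofReal_div, ofReal_mul, h, mul_div_cancel_left₀]
  exact ofReal_ne_zero.2 (Gamma_pos_of_pos (add_pos hb hc)).ne'

theorem integral_Ioo_sub_rpow_mul_rpow_ofReal {b c t : ℝ} (hb : 0 < b) (hc : 0 < c)
    (ht : 0 < t) :
    ∫ s in Ioo 0 t, (((t - s) ^ (b - 1) * s ^ (c - 1) : ℝ) : ℂ) =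
      ((Gamma b * Gamma c / Gamma (b + c) * t ^ (b + c - 1) : ℝ) : ℂ) := by
  rw [← integral_Ioc_eq_integral_Ioo, ← intervalIntegral.integral_of_le ht.le]
  have hcpow : EqOn (fun s : ℝ ↦ (((t - s) ^ (b - 1) * s ^ (c - 1) : ℝ) : ℂ))
      (fun s : ℝ ↦ (s : ℂ) ^ ((c : ℂ) - 1) * ((t : ℂ) - s) ^ ((b : ℂ) - 1)) (uIcc 0 t) := by
    intro s hs
    rw [uIcc_of_le ht.le] at hs
    dsimp only
    rw [Complex.ofReal_mul, Complex.ofReal_cpow (sub_nonneg.2 hs.2),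
      Complex.ofReal_cpow hs.1, mul_comm]
    norm_num
  rw [intervalIntegral.integral_congr hcpow, Complex.betaIntegral_scaled _ _ ht,
    Complex.betaIntegral_symm, Complex.betaIntegral_ofReal hb hc, Complex.ofReal_mul,
    Complex.ofReal_cpow ht.le, mul_comm, add_comm (c : ℂ)]
  push_cast
  rfl

theorem integrableOn_Ioo_sub_rpow_mul_rpow {b c t : ℝ} (hb : 0 < b) (hc : 0 < c) (ht : 0 < t) :
    IntegrableOn (fun s ↦ (t - s) ^ (b - 1) * s ^ (c - 1)) (Ioo 0 t) := by
  have hne : ∫ s in Ioo 0 t, (((t - s) ^ (b - 1) * s ^ (c - 1) : ℝ) : ℂ) ≠ 0 := by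
    rw [integral_Ioo_sub_rpow_mul_rpow_ofReal hb hc ht, Complex.ofReal_ne_zero]
    have := Gamma_pos_of_pos hb
    have := Gamma_pos_of_pos hc
    have := Gamma_pos_of_pos (add_pos hb hc)
    positivity
  -- A nonzero Bochner integral forces integrability: no estimate at the endpoint singularities.
  simpa [IntegrableOn] using (Integrable.of_integral_ne_zero hne).re

theorem integral_Ioo_sub_rpow_mul_rpow {b c t : ℝ} (hb : 0 < b) (hc : 0 < c) (ht : 0 < t) :
    ∫ s in Ioo 0 t, (t - s) ^ (b - 1) * s ^ (c - 1) =
      Gamma b * Gamma c / Gamma (b + c) * t ^ (b + c - 1) := by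
  apply Complex.ofReal_injective
  rw [← integral_Ioo_sub_rpow_mul_rpow_ofReal hb hc ht]
  exact integral_complex_ofReal.symm

section MittagLeffler

variable {a t : ℝ}

theorem ofReal_rpow_mul_mittagLeffler_eq_tsum (ζ : ℂ) {s : ℝ} (hs : 0 < s) :
    ((s ^ (a - 1) : ℝ) : ℂ) * mittagLeffler a a (ζ * ((s ^ a : ℝ) : ℂ)) =
      ∑' k : ℕ, ζ ^ k / (Gamma (a * k + a) : ℂ) * ((s ^ (a * k + a - 1) : ℝ) : ℂ) := by
  rw [mittagLeffler, ← tsum_mul_left]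
  congr 1 with k
  have hpow : s ^ (a * k + a - 1) = s ^ (a - 1) * (s ^ a) ^ k := by
    rw [← rpow_natCast, ← rpow_mul hs.le, ← rpow_add hs]
    congr 1
    ring
  rw [hpow]
  push_cast
  ring

theorem integrableOn_Ioo_sub_rpow_neg_mul_rpow (ha0 : 0 < a) (ha1 : a < 1) (ht : 0 < t) (k : ℕ) :
    IntegrableOn (fun s ↦ (t - s) ^ (-a) * s ^ (a * k + a - 1)) (Ioo 0 t) := by
  simpa using integrableOn_Ioo_sub_rpow_mul_rpow (b := 1 - a) (c := a * k + a) (by linarith)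
    (by positivity) ht

theorem integral_Ioo_sub_rpow_neg_mul_rpow (ha0 : 0 < a) (ha1 : a < 1) (ht : 0 < t) (k : ℕ) :
    ∫ s in Ioo 0 t, (t - s) ^ (-a) * s ^ (a * k + a - 1) =
      Gamma (1 - a) * Gamma (a * k + a) / Gamma (a * k + 1) * (t ^ a) ^ k := by
  have h := integral_Ioo_sub_rpow_mul_rpow (b := 1 - a) (c := a * k + a) (by linarith)
    (by positivity) ht
  rwa [sub_sub_cancel_left, show 1 - a + (a * k + a) = a * k + 1 by ring, add_sub_cancel_right,
    rpow_mul ht.le, rpow_natCast] at h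

variable (a t : ℝ) (ζ : ℂ) in
noncomputable def mittagLefflerIntegrandTerm (k : ℕ) (s : ℝ) : ℂ :=
  ζ ^ k / (Gamma (a * k + a) : ℂ) * (((t - s) ^ (-a) * s ^ (a * k + a - 1) : ℝ) : ℂ)

theorem eqOn_tsum_mittagLefflerIntegrandTerm (ζ : ℂ) :
    EqOn (fun s : ℝ ↦ (((t - s) ^ (-a) : ℝ) : ℂ) * (((s ^ (a - 1) : ℝ) : ℂ) *
        mittagLeffler a a (ζ * ((s ^ a : ℝ) : ℂ))))
      (fun s ↦ ∑' k, mittagLefflerIntegrandTerm a t ζ k s) (Ioo 0 t) := by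
  intro s hs
  simp only [ofReal_rpow_mul_mittagLeffler_eq_tsum ζ hs.1, ← tsum_mul_left,
    mittagLefflerIntegrandTerm]
  congr 1 with k
  push_cast
  ring

theorem integrableOn_mittagLefflerIntegrandTerm (ha0 : 0 < a) (ha1 : a < 1) (ht : 0 < t)
    (ζ : ℂ) (k : ℕ) : IntegrableOn (mittagLefflerIntegrandTerm a t ζ k) (Ioo 0 t) :=
  (integrableOn_Ioo_sub_rpow_neg_mul_rpow ha0 ha1 ht k).ofReal.const_mul _

theorem integral_mittagLefflerIntegrandTerm (ha0 : 0 < a) (ha1 : a < 1) (ht : 0 < t)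
    (ζ : ℂ) (k : ℕ) :
    ∫ s in Ioo 0 t, mittagLefflerIntegrandTerm a t ζ k s =
      Gamma (1 - a) * ((ζ * ((t ^ a : ℝ) : ℂ)) ^ k / (Gamma (a * k + 1) : ℂ)) := by
  have hΓ : (Gamma (a * k + a) : ℂ) ≠ 0 :=
    Complex.ofReal_ne_zero.2 (Gamma_pos_of_pos (by positivity)).ne'
  simp only [mittagLefflerIntegrandTerm]
  rw [integral_const_mul, integral_complex_ofReal, integral_Ioo_sub_rpow_neg_mul_rpow ha0 ha1 ht k]
  simp only [Complex.ofReal_mul, Complex.ofReal_div, Complex.ofReal_pow]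
  generalize (Gamma (a * k + a) : ℂ) = G at hΓ ⊢
  field_simp
  ring

theorem integral_norm_mittagLefflerIntegrandTerm (ha0 : 0 < a) (ha1 : a < 1) (ht : 0 < t)
    (ζ : ℂ) (k : ℕ) :
    ∫ s in Ioo 0 t, ‖mittagLefflerIntegrandTerm a t ζ k s‖ =
      Gamma (1 - a) * ((‖ζ‖ * t ^ a) ^ k / Gamma (a * k + 1)) := by
  have hΓ : 0 < Gamma (a * k + a) := Gamma_pos_of_pos (by positivity)
  have hnorm : EqOn (fun s ↦ ‖mittagLefflerIntegrandTerm a t ζ k s‖)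
      (fun s ↦ ‖ζ‖ ^ k / Gamma (a * k + a) * ((t - s) ^ (-a) * s ^ (a * k + a - 1))) (Ioo 0 t) := by
    intro s hs
    simp only [mittagLefflerIntegrandTerm, norm_mul, norm_div, norm_pow, Complex.norm_real,
      norm_of_nonneg hΓ.le, norm_of_nonneg (rpow_nonneg hs.1.le _),
      norm_of_nonneg (rpow_nonneg (sub_pos.2 hs.2).le _)]
  rw [setIntegral_congr_fun measurableSet_Ioo hnorm, integral_const_mul,
    integral_Ioo_sub_rpow_neg_mul_rpow ha0 ha1 ht k]
  field_simp
  ring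

end MittagLeffler

/-- For `0 < α < 1`, `ζ ∈ ℂ` and `t > 0`, the Riemann–Liouville fractional integral of
order `1 − α` of `s ↦ s^{α−1} E_{α,α}(ζ s^α)` equals `E_{α,1}(ζ t^α)`:
`(1/Γ(1−α)) ∫₀^t (t−s)^{−α} s^{α−1} E_{α,α}(ζ s^α) ds = E_{α,1}(ζ t^α)`. -/
theorem riemann_liouville_integral_mittagLeffler
    (a : ℝ) (ha0 : 0 < a) (ha1 : a < 1) (ζ : ℂ) (t : ℝ) (ht : 0 < t) :
    MeasureTheory.IntegrableOn
      (fun s : ℝ => (((t - s) ^ (-a) : ℝ) : ℂ) * (((s ^ (a - 1) : ℝ) : ℂ) *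
        mittagLeffler a a (ζ * ((s ^ a : ℝ) : ℂ))))
      (Set.Ioo 0 t) ∧
    (1 / (Real.Gamma (1 - a) : ℂ)) *
        ∫ s in Set.Ioo (0 : ℝ) t, (((t - s) ^ (-a) : ℝ) : ℂ) * (((s ^ (a - 1) : ℝ) : ℂ) *
          mittagLeffler a a (ζ * ((s ^ a : ℝ) : ℂ)))
      = mittagLeffler a 1 (ζ * ((t ^ a : ℝ) : ℂ)) := by
  have hF := eqOn_tsum_mittagLefflerIntegrandTerm (a := a) (t := t) ζ
  have hint := integrableOn_mittagLefflerIntegrandTerm ha0 ha1 ht ζ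
  have hsum : Summable fun k ↦ ∫ s in Ioo 0 t, ‖mittagLefflerIntegrandTerm a t ζ k s‖ := by
    simp_rw [integral_norm_mittagLefflerIntegrandTerm ha0 ha1 ht]
    exact (summable_pow_div_Gamma_mul_add ha0 one_pos _).mul_left _
  refine ⟨IntegrableOn.congr_fun (integrable_tsum_of_summable_integral_norm hint hsum) hF.symm
    measurableSet_Ioo, ?_⟩
  rw [setIntegral_congr_fun measurableSet_Ioo hF,
    ← integral_tsum_of_summable_integral_norm hint hsum]
  simp_rw [integral_mittagLefflerIntegrandTerm ha0 ha1 ht, tsum_mul_left]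
  have hΓ : (Gamma (1 - a) : ℂ) ≠ 0 := Complex.ofReal_ne_zero.2 (Gamma_pos_of_pos (by linarith)).ne'
  rw [mittagLeffler, one_div, inv_mul_cancel_left₀ hΓ]
end

section
/- Let 0 < α < 1, 0 < β < 1, let λ > 0 and λ' > 0 be real numbers, and let T > 0. If E_{α,1}(−i λ t^α) = E_{β,1}(−i λ' t^β) for every t ∈ (0, T), then α = β and λ = λ'. -/
/-! Near `t = 0`, `E_{α,1}(c t^α) - 1 = c t^α / Γ(α + 1) + o(t^α)`, since `E_{α,1}` is a power series
with bounded coefficients and derivative `1 / Γ(α + 1)` at the origin. The common value of both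
sides of the hypothesis therefore has a leading term `-iλ t^α / Γ(α + 1) = -iλ' t^β / Γ(β + 1)`;
a nonzero leading term `u t^α` determines both the exponent and the coefficient, because
`t^(β - α) → 0` when `α < β`. -/

open Filter Topology FormalMultilinearSeries

lemma Real.half_le_Gamma_of_one_le {x : ℝ} (hx : 1 ≤ x) : 1 / 2 ≤ Real.Gamma x := by
  have one_le_Gamma : ∀ y : ℝ, 2 ≤ y → 1 ≤ Real.Gamma y := fun y hy => by
    simpa [Real.Gamma_two] using
      Real.Gamma_strictMonoOn_Ici.monotoneOn (Set.mem_Ici.mpr le_rfl) (Set.mem_Ici.mpr hy) hy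
  rcases le_or_gt 2 x with h2 | h2
  · linarith [one_le_Gamma x h2]
  · have hrec : Real.Gamma (x + 1) = x * Real.Gamma x := Real.Gamma_add_one (by linarith)
    nlinarith [one_le_Gamma (x + 1) (by linarith), Real.Gamma_pos_of_pos (by linarith : 0 < x)]

lemma hasDerivAt_ofScalarsSum_zero {𝕜 : Type*} [NontriviallyNormedField 𝕜] [CompleteSpace 𝕜]
    {c : ℕ → 𝕜} (hc : 0 < (ofScalars 𝕜 c).radius) :
    HasDerivAt (ofScalarsSum (E := 𝕜) c) (c 1) 0 := by
  have h := ((ofScalars 𝕜 c).hasFPowerSeriesOnBall hc).hasFPowerSeriesAt.hasDerivAt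
  rwa [ofScalars_apply_eq, one_pow, smul_eq_mul, mul_one] at h

lemma one_le_radius_ofScalars_of_norm_le {𝕜 : Type*} [NontriviallyNormedField 𝕜] {c : ℕ → 𝕜}
    {C : ℝ} (hc : ∀ n, ‖c n‖ ≤ C) : 1 ≤ (ofScalars 𝕜 c).radius := by
  simpa using (ofScalars 𝕜 c).le_radius_of_bound C (r := 1) fun n => by simpa using hc n

lemma mittagLeffler_eq_ofScalarsSum (a b : ℝ) :
    mittagLeffler a b = ofScalarsSum (E := ℂ) fun k => ((Real.Gamma (a * k + b) : ℂ))⁻¹ := by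
  ext w
  simp [mittagLeffler, ofScalars_sum_eq, div_eq_inv_mul]

lemma mittagLeffler_zero (a b : ℝ) : mittagLeffler a b 0 = ((Real.Gamma b : ℂ))⁻¹ := by
  simp [mittagLeffler_eq_ofScalarsSum, ofScalarsSum_zero]

lemma hasDerivAt_mittagLeffler_zero {a : ℝ} (ha : 0 ≤ a) :
    HasDerivAt (mittagLeffler a 1) ((Real.Gamma (a + 1) : ℂ))⁻¹ 0 := by
  have hΓ : ∀ k : ℕ, 1 / 2 ≤ Real.Gamma (a * k + 1) := fun k =>
    Real.half_le_Gamma_of_one_le (le_add_of_nonneg_left (mul_nonneg ha k.cast_nonneg))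
  have hc : ∀ k : ℕ, ‖((Real.Gamma (a * k + 1) : ℂ))⁻¹‖ ≤ 2 := fun k => by
    rw [norm_inv, Complex.norm_real, Real.norm_of_nonneg (by linarith [hΓ k])]
    exact inv_le_of_inv_le₀ (by norm_num) (by simpa using hΓ k)
  rw [mittagLeffler_eq_ofScalarsSum]
  simpa using hasDerivAt_ofScalarsSum_zero
    (zero_lt_one.trans_le (one_le_radius_ofScalars_of_norm_le hc))

lemma tendsto_rpow_nhdsGT_zero {a : ℝ} (ha : 0 < a) :
    Tendsto (fun t : ℝ => t ^ a) (𝓝[>] 0) (𝓝[>] 0) := by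
  refine tendsto_nhdsWithin_iff.mpr ⟨?_, ?_⟩
  · simpa [Real.zero_rpow ha.ne'] using
      (Real.continuousAt_rpow_const 0 a (Or.inr ha.le)).tendsto.mono_left nhdsWithin_le_nhds
  · filter_upwards [self_mem_nhdsWithin] with t ht using Real.rpow_pos_of_pos ht a

lemma tendsto_mittagLeffler_sub_one_div_rpow {a : ℝ} (ha : 0 < a) (c : ℂ) :
    Tendsto (fun t : ℝ => (mittagLeffler a 1 (c * ((t ^ a : ℝ) : ℂ)) - 1) / ((t ^ a : ℝ) : ℂ))
      (𝓝[>] 0) (𝓝 (c / Real.Gamma (a + 1))) := by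
  have hscale : HasDerivAt (fun w : ℂ => c * w) c 0 := by
    simpa using (hasDerivAt_id (0 : ℂ)).const_mul c
  have hderiv : HasDerivAt (fun s : ℝ => mittagLeffler a 1 (c * s)) (c / Real.Gamma (a + 1)) 0 := by
    have := (hasDerivAt_mittagLeffler_zero ha.le).comp_of_eq 0 hscale (mul_zero c).symm
    rw [inv_mul_eq_div] at this
    exact HasDerivAt.comp_ofReal (e := fun w => mittagLeffler a 1 (c * w))
      (by rw [Complex.ofReal_zero]; exact this)
  refine (hderiv.tendsto_slope_zero_right.comp (tendsto_rpow_nhdsGT_zero ha)).congr fun t => ?_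
  simp [mittagLeffler_zero, div_eq_inv_mul]

section LeadingTerm

variable {f : ℝ → ℂ} {a b : ℝ} {u v : ℂ}

lemma eq_zero_of_tendsto_div_rpow_of_lt (hab : a < b)
    (hfa : Tendsto (fun t => f t / ((t ^ a : ℝ) : ℂ)) (𝓝[>] 0) (𝓝 u))
    (hfb : Tendsto (fun t => f t / ((t ^ b : ℝ) : ℂ)) (𝓝[>] 0) (𝓝 v)) : u = 0 := by
  have hsplit : ∀ᶠ t in 𝓝[>] (0 : ℝ),
      f t / ((t ^ b : ℝ) : ℂ) * ((t ^ (b - a) : ℝ) : ℂ) = f t / ((t ^ a : ℝ) : ℂ) := by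
    filter_upwards [self_mem_nhdsWithin] with t (ht : 0 < t)
    have hb : t ^ b = t ^ a * t ^ (b - a) := by rw [← Real.rpow_add ht, add_sub_cancel]
    have hpos : (0 : ℝ) < t ^ (b - a) := Real.rpow_pos_of_pos ht _
    rw [hb, Complex.ofReal_mul, ← div_div, div_mul_cancel₀ _ (by exact_mod_cast hpos.ne')]
  have hpow : Tendsto (fun t : ℝ => ((t ^ (b - a) : ℝ) : ℂ)) (𝓝[>] 0) (𝓝 0) :=
    Complex.ofReal_zero ▸ (Complex.continuous_ofReal.tendsto 0).comp
      ((tendsto_rpow_nhdsGT_zero (sub_pos.mpr hab)).mono_right nhdsWithin_le_nhds)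
  simpa using tendsto_nhds_unique hfa ((hfb.mul hpow).congr' hsplit)

lemma eq_and_eq_of_tendsto_div_rpow (hu : u ≠ 0) (hv : v ≠ 0)
    (hfa : Tendsto (fun t => f t / ((t ^ a : ℝ) : ℂ)) (𝓝[>] 0) (𝓝 u))
    (hfb : Tendsto (fun t => f t / ((t ^ b : ℝ) : ℂ)) (𝓝[>] 0) (𝓝 v)) : a = b ∧ u = v := by
  obtain hab | rfl | hba := lt_trichotomy a b
  · exact absurd (eq_zero_of_tendsto_div_rpow_of_lt hab hfa hfb) hu
  · exact ⟨rfl, tendsto_nhds_unique hfa hfb⟩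
  · exact absurd (eq_zero_of_tendsto_div_rpow_of_lt hba hfb hfa) hv

end LeadingTerm

theorem order_uniqueness_general (a b : ℝ) (ha0 : 0 < a) (hb0 : 0 < b)
    (lam lam' : ℝ) (hlam : 0 < lam) (hlam' : 0 < lam') (T : ℝ) (hT : 0 < T)
    (h : ∀ t ∈ Set.Ioo (0 : ℝ) T,
      mittagLeffler a 1 (-Complex.I * lam * ((t ^ a : ℝ) : ℂ))
        = mittagLeffler b 1 (-Complex.I * lam' * ((t ^ b : ℝ) : ℂ))) :
    a = b ∧ lam = lam' := by
  have hΓ : ∀ x : ℝ, 0 < x → ((Real.Gamma (x + 1) : ℂ)) ≠ 0 := fun x hx =>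
    Complex.ofReal_ne_zero.mpr (Real.Gamma_pos_of_pos (by linarith)).ne'
  have hlimb := tendsto_mittagLeffler_sub_one_div_rpow hb0 (-Complex.I * lam')
  have hlima := (tendsto_mittagLeffler_sub_one_div_rpow ha0 (-Complex.I * lam)).congr'
    (by filter_upwards [Ioo_mem_nhdsGT hT] with t ht; rw [h t ht])
  obtain ⟨rfl, hcoef⟩ := eq_and_eq_of_tendsto_div_rpow
    (by simp [hΓ a ha0, hlam.ne']) (by simp [hΓ b hb0, hlam'.ne']) hlima hlimb
  refine ⟨rfl, ?_⟩
  rw [div_left_inj' (hΓ a ha0), mul_right_inj' (neg_ne_zero.mpr Complex.I_ne_zero)] at hcoef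
  exact_mod_cast hcoef

/-- Uniqueness of the fractional order: if `0 < α, β < 1`, `λ, λ' > 0`, `T > 0` and
`E_{α,1}(−i λ t^α) = E_{β,1}(−i λ' t^β)` for all `t ∈ (0, T)`, then `α = β` and `λ = λ'`. -/
theorem order_uniqueness (a b : ℝ) (ha0 : 0 < a) (ha1 : a < 1) (hb0 : 0 < b) (hb1 : b < 1)
    (lam lam' : ℝ) (hlam : 0 < lam) (hlam' : 0 < lam') (T : ℝ) (hT : 0 < T)
    (h : ∀ t ∈ Set.Ioo (0 : ℝ) T,
      mittagLeffler a 1 (-Complex.I * lam * ((t ^ a : ℝ) : ℂ))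
        = mittagLeffler b 1 (-Complex.I * lam' * ((t ^ b : ℝ) : ℂ))) :
    a = b ∧ lam = lam' :=
  order_uniqueness_general a b ha0 hb0 lam lam' hlam hlam' T hT h
end
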